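/- arXiv:1909.05477 — 3 statements merged into one kernel-verified Lean document; each statement's English description precedes it below -/
import Mathlib

section
/- For the greedy algorithm on weighted maximum coverage: given a finite collection of sets S_1,...,S_m over a finite ground set with nonnegative weights w, if the greedy algorithm at each step picks the set covering the maximum uncovered weight, then after i steps the total weight covered by the greedy solution is at least (1 - ((i-1)/i)^i) times the maximum weight coverable by any union of i sets from the collection. -/
/-!
If the greedy solution after `t` steps covers weight `f t` and some `k` sets cover `OPT`, then
those `k` sets cover at least `OPT - f t` uncovered weight, so one of them (hence the greedy
choice) gains at least `(OPT - f t) / k`. The deficit `OPT - f t` thus shrinks by the factor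
`(k - 1) / k` at every step, and after `k` steps it is at most `((k - 1) / k) ^ k * OPT`.
-/

open Finset

section Coverage

variable {α ι : Type*} [DecidableEq α] {w : α → ℝ}

theorem Finset.sum_union_le_add (hw : ∀ a, 0 ≤ w a) (s t : Finset α) :
    ∑ a ∈ s ∪ t, w a ≤ ∑ a ∈ s, w a + ∑ a ∈ t, w a := by
  rw [← sum_union_inter]
  exact le_add_of_nonneg_right (sum_nonneg fun a _ => hw a)

theorem Finset.sum_biUnion_le_sum_sum (hw : ∀ a, 0 ≤ w a) (T : Finset ι) (S : ι → Finset α) :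
    ∑ a ∈ T.biUnion S, w a ≤ ∑ j ∈ T, ∑ a ∈ S j, w a := by
  rw [← sup_eq_biUnion]
  exact T.apply_sup_le_sum (f := fun s => ∑ a ∈ s, w a) sum_empty (sum_union_le_add hw _ _)

theorem Finset.sum_biUnion_le_sum_add_card_mul (hw : ∀ a, 0 ≤ w a) {T : Finset ι}
    {S : ι → Finset α} {C : Finset α} {g : ℝ} (hg : ∀ j ∈ T, ∑ a ∈ S j \ C, w a ≤ g) :
    ∑ a ∈ T.biUnion S, w a ≤ ∑ a ∈ C, w a + T.card * g := by
  have hsub : T.biUnion S ⊆ C ∪ T.biUnion (fun j => S j \ C) := by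
    intro a ha
    by_cases haC : a ∈ C
    · exact mem_union_left _ haC
    · obtain ⟨j, hj, haj⟩ := mem_biUnion.mp ha
      exact mem_union_right _ (mem_biUnion.mpr ⟨j, hj, mem_sdiff.mpr ⟨haj, haC⟩⟩)
  calc ∑ a ∈ T.biUnion S, w a
      ≤ ∑ a ∈ C ∪ T.biUnion (fun j => S j \ C), w a :=
        sum_le_sum_of_subset_of_nonneg hsub fun a _ _ => hw a
    _ ≤ ∑ a ∈ C, w a + ∑ j ∈ T, ∑ a ∈ S j \ C, w a :=
        (sum_union_le_add hw _ _).trans (add_le_add_right (sum_biUnion_le_sum_sum hw _ _) _)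
    _ ≤ ∑ a ∈ C, w a + T.card * g := by
        grw [sum_le_sum hg, sum_const, nsmul_eq_mul]

end Coverage

section Greedy

variable {U ι : Type*} [DecidableEq U] {w : U → ℝ} {S : ι → Finset U} {pick : ℕ → ι}
  {covered : ℕ → Finset U}

theorem sum_covered_succ (hcov : ∀ i, covered i = (range i).biUnion (fun t => S (pick t)))
    (t : ℕ) :
    ∑ u ∈ covered (t + 1), w u = ∑ u ∈ covered t, w u + ∑ u ∈ S (pick t) \ covered t, w u := by
  have hsucc : covered (t + 1) = covered t ∪ S (pick t) \ covered t := by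
    rw [union_sdiff_self_eq_union, hcov, hcov, range_add_one, biUnion_insert, union_comm]
  rw [hsucc, sum_union disjoint_sdiff]

theorem greedy_deficit_succ_le (hw : ∀ u, 0 ≤ w u)
    (hcov : ∀ i, covered i = (range i).biUnion (fun t => S (pick t))) {t : ℕ}
    (hgreedy : ∀ j, ∑ u ∈ S j \ covered t, w u ≤ ∑ u ∈ S (pick t) \ covered t, w u)
    {T : Finset ι} (hT : 0 < T.card) :
    ∑ u ∈ T.biUnion S, w u - ∑ u ∈ covered (t + 1), w u
      ≤ ((T.card : ℝ) - 1) / T.card * (∑ u ∈ T.biUnion S, w u - ∑ u ∈ covered t, w u) := by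
  have hk : (0 : ℝ) < T.card := by exact_mod_cast hT
  set deficit := ∑ u ∈ T.biUnion S, w u - ∑ u ∈ covered t, w u
  have hgain : deficit / T.card ≤ ∑ u ∈ S (pick t) \ covered t, w u := by
    rw [div_le_iff₀ hk]
    linarith [sum_biUnion_le_sum_add_card_mul hw (T := T) (S := S) (C := covered t)
      fun j _ => hgreedy j]
  have hfactor : ((T.card : ℝ) - 1) / T.card * deficit = deficit - deficit / T.card := by
    field_simp
  rw [sum_covered_succ hcov, hfactor]
  linarith

end Greedy

theorem greedy_max_coverage_bound_general {U : Type*} [DecidableEq U] {m : ℕ}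
    (w : U → NNReal) (S : Fin m → Finset U)
    (pick : ℕ → Fin m)
    (covered : ℕ → Finset U)
    (hcov : ∀ i, covered i = (Finset.range i).biUnion (fun t => S (pick t)))
    (hgreedy : ∀ i, ∀ j : Fin m,
      ∑ u ∈ S j \ covered i, (w u : ℝ) ≤ ∑ u ∈ S (pick i) \ covered i, (w u : ℝ)) :
    ∀ i : ℕ, 0 < i → ∀ T : Finset (Fin m), T.card = i →
      (1 - (((i : ℝ) - 1) / i) ^ i) * (∑ u ∈ T.biUnion S, (w u : ℝ))
        ≤ ∑ u ∈ covered i, (w u : ℝ) := by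
  rintro i hi T rfl
  have hr : (0 : ℝ) ≤ ((T.card : ℝ) - 1) / T.card :=
    div_nonneg (sub_nonneg.mpr (by exact_mod_cast hi)) (Nat.cast_nonneg _)
  have hdeficit :=
    le_geom (u := fun t => ∑ u ∈ T.biUnion S, (w u : ℝ) - ∑ u ∈ covered t, (w u : ℝ)) hr T.card
      fun t _ =>
        greedy_deficit_succ_le (fun u => (w u).coe_nonneg) hcov (hgreedy t) hi
  have hcovered_zero : covered 0 = ∅ := by simp [hcov]
  rw [hcovered_zero, sum_empty, sub_zero] at hdeficit
  linarith

/-- Greedy weighted maximum coverage: after `i` steps, the greedy solution covers at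
least `(1 - ((i-1)/i)^i)` of the best coverage achievable by any `i` sets. -/
theorem greedy_max_coverage_bound {U : Type*} [DecidableEq U] [Fintype U] {m : ℕ}
    (w : U → NNReal) (S : Fin m → Finset U)
    (pick : ℕ → Fin m)
    (covered : ℕ → Finset U)
    (hcov : ∀ i, covered i = (Finset.range i).biUnion (fun t => S (pick t)))
    (hgreedy : ∀ i, ∀ j : Fin m,
      ∑ u ∈ S j \ covered i, (w u : ℝ) ≤ ∑ u ∈ S (pick i) \ covered i, (w u : ℝ)) :
    ∀ i : ℕ, 0 < i → ∀ T : Finset (Fin m), T.card = i →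
      (1 - (((i : ℝ) - 1) / i) ^ i) * (∑ u ∈ T.biUnion S, (w u : ℝ))
        ≤ ∑ u ∈ covered i, (w u : ℝ) :=
  greedy_max_coverage_bound_general w S pick covered hcov hgreedy
end

section
/- For the greedy weighted maximum coverage algorithm, at each step the newly covered weight is at least 1/k times the remaining gap to the optimal k-set coverage; consequently the uncovered portion of the optimum shrinks by a factor of at least (1 - 1/k) per iteration. -/
/-!
Fix an optimal family `T` of `k` sets. The weight of its union not yet covered is at most the
sum over `T` of the new weight each of its sets would add, and greedy's choice adds at least as
much as any of them; so the gap `OPT - g i` is at most `k` times the greedy gain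
`g (i + 1) - g i`. Equivalently `OPT - g (i + 1) ≤ (1 - 1/k) (OPT - g i)`, which iterates from
`g 0 = 0`.
-/

open Finset

section WeightedCoverage

variable {α ι β : Type*} [DecidableEq α]

theorem sum_union_le_add_of_nonneg [AddCommMonoid β] [PartialOrder β] [IsOrderedAddMonoid β]
    {f : α → β} (hf : ∀ a, 0 ≤ f a) (s t : Finset α) :
    ∑ a ∈ s ∪ t, f a ≤ ∑ a ∈ s, f a + ∑ a ∈ t, f a := by
  rw [← sum_union_inter]
  exact le_add_of_nonneg_right (sum_nonneg fun a _ => hf a)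

theorem sum_biUnion_le_sum_sum_of_nonneg [AddCommMonoid β] [PartialOrder β]
    [IsOrderedAddMonoid β] {f : α → β} (hf : ∀ a, 0 ≤ f a) (T : Finset ι) (S : ι → Finset α) :
    ∑ a ∈ T.biUnion S, f a ≤ ∑ j ∈ T, ∑ a ∈ S j, f a := by
  rw [← sup_eq_biUnion]
  exact T.apply_sup_le_sum (f := fun s => ∑ a ∈ s, f a) sum_empty
    (sum_union_le_add_of_nonneg hf _ _)

variable {f : α → ℝ}

theorem sum_union_sub_sum_eq_sum_sdiff (s t : Finset α) :
    ∑ a ∈ s ∪ t, f a - ∑ a ∈ s, f a = ∑ a ∈ t \ s, f a := by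
  rw [sub_eq_iff_eq_add, ← sum_sdiff subset_union_left, union_sdiff_left]

theorem sum_sub_sum_le_sum_sdiff (hf : ∀ a, 0 ≤ f a) (s t : Finset α) :
    ∑ a ∈ s, f a - ∑ a ∈ t, f a ≤ ∑ a ∈ s \ t, f a := by
  rw [sub_le_iff_le_add]
  calc ∑ a ∈ s, f a ≤ ∑ a ∈ s \ t ∪ t, f a :=
        sum_le_sum_of_subset_of_nonneg (by simp) fun a _ _ => hf a
    _ ≤ ∑ a ∈ s \ t, f a + ∑ a ∈ t, f a := sum_union_le_add_of_nonneg hf _ _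

theorem sum_biUnion_sub_sum_le_card_mul_of_forall_le (hf : ∀ a, 0 ≤ f a) (T : Finset ι)
    (S : ι → Finset α) (C P : Finset α)
    (hP : ∀ j ∈ T, ∑ a ∈ S j \ C, f a ≤ ∑ a ∈ P \ C, f a) :
    ∑ a ∈ T.biUnion S, f a - ∑ a ∈ C, f a ≤ #T * ∑ a ∈ P \ C, f a :=
  calc ∑ a ∈ T.biUnion S, f a - ∑ a ∈ C, f a
      ≤ ∑ a ∈ T.biUnion S \ C, f a := sum_sub_sum_le_sum_sdiff hf _ _
    _ = ∑ a ∈ T.biUnion fun j => S j \ C, f a := by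
        rw [← sup_eq_biUnion, ← sup_eq_biUnion, Finset.sup_sdiff_right]
    _ ≤ ∑ j ∈ T, ∑ a ∈ S j \ C, f a := sum_biUnion_le_sum_sum_of_nonneg hf _ _
    _ ≤ ∑ _j ∈ T, ∑ a ∈ P \ C, f a := sum_le_sum hP
    _ = #T * ∑ a ∈ P \ C, f a := by rw [sum_const, nsmul_eq_mul]

end WeightedCoverage

theorem sub_le_mul_pow_of_forall_div_le_sub {g : ℕ → ℝ} {a : ℝ} {k n : ℕ}
    (h : ∀ i < n, (a - g i) / k ≤ g (i + 1) - g i) :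
    a - g n ≤ (a - g 0) * (1 - 1 / k) ^ n := by
  have hc : 0 ≤ 1 - 1 / (k : ℝ) := sub_nonneg.2 (one_div (k : ℝ) ▸ Nat.cast_inv_le_one k)
  rw [mul_comm]
  refine le_geom (u := fun i => a - g i) hc n fun i hi => ?_
  have hgap := h i hi
  have : (1 - 1 / (k : ℝ)) * (a - g i) = a - g i - (a - g i) / k := by ring
  linarith

theorem greedy_step_gap_bound_general {U : Type*} [DecidableEq U] {m : ℕ}
    (w : U → NNReal) (S : Fin m → Finset U) (k : ℕ)
    (pick : ℕ → Fin m)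
    (covered : ℕ → Finset U)
    (hcov : ∀ i, covered i = (Finset.range i).biUnion (fun t => S (pick t)))
    (hgreedy : ∀ i, ∀ j : Fin m,
      ∑ u ∈ S j \ covered i, (w u : ℝ) ≤ ∑ u ∈ S (pick i) \ covered i, (w u : ℝ))
    (g : ℕ → ℝ) (hg : ∀ i, g i = ∑ u ∈ covered i, (w u : ℝ))
    (OPT : ℝ)
    (hOPT : IsGreatest {x : ℝ | ∃ T : Finset (Fin m), T.card = k ∧
      x = ∑ u ∈ T.biUnion S, (w u : ℝ)} OPT) :
    (∀ i, i < k → (OPT - g i) / k ≤ g (i + 1) - g i) ∧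
    (∀ i, i ≤ k → OPT - g i ≤ OPT * (1 - 1 / (k : ℝ)) ^ i) := by
  have hw : ∀ u, 0 ≤ (w u : ℝ) := fun u => (w u).coe_nonneg
  obtain ⟨T, hTcard, hT⟩ := hOPT.1
  have hgain : ∀ i, g (i + 1) - g i = ∑ u ∈ S (pick i) \ covered i, (w u : ℝ) := fun i => by
    rw [hg, hg, hcov (i + 1), range_add_one, biUnion_insert, ← hcov, union_comm,
      sum_union_sub_sum_eq_sum_sdiff]
  have hstep : ∀ i, (OPT - g i) / k ≤ g (i + 1) - g i := fun i => by
    rw [hgain]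
    refine div_le_of_le_mul₀ k.cast_nonneg (sum_nonneg fun u _ => hw u) ?_
    rw [mul_comm, ← hTcard, hT, hg]
    exact sum_biUnion_sub_sum_le_card_mul_of_forall_le hw T S _ _ fun j _ => hgreedy i j
  have hg0 : g 0 = 0 := by simp [hg, hcov]
  refine ⟨fun i _ => hstep i, fun i _ => ?_⟩
  simpa [hg0] using sub_le_mul_pow_of_forall_div_le_sub (n := i) fun j _ => hstep j

/-- Greedy weighted max coverage: each step closes at least a `1/k` fraction of the
gap to the optimal `k`-set coverage, hence the uncovered part of the optimum shrinks
geometrically with factor `(1 - 1/k)`. -/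
theorem greedy_step_gap_bound {U : Type*} [DecidableEq U] [Fintype U] {m : ℕ}
    (w : U → NNReal) (S : Fin m → Finset U) (k : ℕ) (hk : 0 < k)
    (pick : ℕ → Fin m)
    (covered : ℕ → Finset U)
    (hcov : ∀ i, covered i = (Finset.range i).biUnion (fun t => S (pick t)))
    (hgreedy : ∀ i, ∀ j : Fin m,
      ∑ u ∈ S j \ covered i, (w u : ℝ) ≤ ∑ u ∈ S (pick i) \ covered i, (w u : ℝ))
    (g : ℕ → ℝ) (hg : ∀ i, g i = ∑ u ∈ covered i, (w u : ℝ))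
    (OPT : ℝ)
    (hOPT : IsGreatest {x : ℝ | ∃ T : Finset (Fin m), T.card = k ∧
      x = ∑ u ∈ T.biUnion S, (w u : ℝ)} OPT) :
    (∀ i, i < k → (OPT - g i) / k ≤ g (i + 1) - g i) ∧
    (∀ i, i ≤ k → OPT - g i ≤ OPT * (1 - 1 / (k : ℝ)) ^ i) :=
  greedy_step_gap_bound_general w S k pick covered hcov hgreedy g hg OPT hOPT
end

section
/- In the maximum entropy trajectory model, if two constraint sets C₁ and C₂ are both consistent with the demonstrations, then C₁ yields a strictly higher demonstration likelihood than C₂ if and only if the probability mass (under the unconstrained max-ent distribution) of trajectories eliminated by C₁ strictly exceeds that eliminated by C₂. -/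
open Finset Real

/-! A constraint only changes the normaliser of the likelihood, namely the surviving mass
`S = Z - Z·P(Ξ⁻)`; as the numerator is positive and `|D| ≠ 0`, the likelihood is strictly
decreasing in `S`, hence strictly increasing in `P(Ξ⁻)`. -/

theorem sum_univ_sdiff_lt_sum_univ_sdiff_iff {ι M : Type*} [Fintype ι] [DecidableEq ι]
    [AddCommGroup M] [PartialOrder M] [IsOrderedAddMonoid M] (f : ι → M) (s t : Finset ι) :
    ∑ i ∈ univ \ s, f i < ∑ i ∈ univ \ t, f i ↔ ∑ i ∈ t, f i < ∑ i ∈ s, f i := by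
  rw [sum_sdiff_eq_sub (subset_univ s), sum_sdiff_eq_sub (subset_univ t), sub_lt_sub_iff_left]

theorem div_pow_lt_div_pow_iff {K : Type*} [Field K] [LinearOrder K] [IsStrictOrderedRing K]
    {a x y : K} {n : ℕ} (ha : 0 < a) (hx : 0 < x) (hy : 0 < y) (hn : n ≠ 0) :
    a / y ^ n < a / x ^ n ↔ x < y := by
  rw [div_lt_div_iff_of_pos_left ha (pow_pos hy n) (pow_pos hx n),
    pow_lt_pow_iff_left₀ hx.le hy.le hn]

theorem strict_likelihood_iff_strict_eliminated_mass_general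
    {Ξ : Type*} [Fintype Ξ] [DecidableEq Ξ]
    (R : Ξ → ℝ)
    (Z : ℝ) (hZ : Z = ∑ ξ : Ξ, Real.exp (R ξ))
    (P : Ξ → ℝ) (hP : ∀ ξ, P ξ = Real.exp (R ξ) / Z)
    (elim₁ elim₂ : Finset Ξ)
    (D : Finset Ξ) (hD : D.Nonempty)
    (hD₁ : D ⊆ Finset.univ \ elim₁) (hD₂ : D ⊆ Finset.univ \ elim₂)
    (lik : Finset Ξ → ℝ)
    (hlik : ∀ E : Finset Ξ, lik E =
      (∏ ξ ∈ D, Real.exp (R ξ)) / (∑ ξ ∈ Finset.univ \ E, Real.exp (R ξ)) ^ D.card) :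
    lik elim₂ < lik elim₁ ↔ ∑ ξ ∈ elim₂, P ξ < ∑ ξ ∈ elim₁, P ξ := by
  have sum_exp_pos : ∀ s : Finset Ξ, D ⊆ s → 0 < ∑ ξ ∈ s, exp (R ξ) := fun s hs =>
    sum_pos (fun _ _ => exp_pos _) (hD.mono hs)
  have hZ_pos : 0 < Z := hZ ▸ sum_exp_pos univ (subset_univ D)
  have mass_eq : ∀ E : Finset Ξ, ∑ ξ ∈ E, P ξ = (∑ ξ ∈ E, exp (R ξ)) / Z := fun E => by
    simp only [hP, sum_div]
  rw [hlik, hlik, div_pow_lt_div_pow_iff (prod_pos fun _ _ => exp_pos _) (sum_exp_pos _ hD₁)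
      (sum_exp_pos _ hD₂) hD.card_ne_zero, sum_univ_sdiff_lt_sum_univ_sdiff_iff, mass_eq,
    mass_eq, div_lt_div_iff_of_pos_right hZ_pos]

/-- For constraints consistent with the demonstrations, `C₁` yields a strictly
higher demonstration likelihood than `C₂` iff the unconstrained max-ent probability
mass eliminated by `C₁` strictly exceeds that eliminated by `C₂`. -/
theorem strict_likelihood_iff_strict_eliminated_mass
    {Ξ : Type*} [Fintype Ξ] [DecidableEq Ξ] [Nonempty Ξ]
    (R : Ξ → ℝ)
    (Z : ℝ) (hZ : Z = ∑ ξ : Ξ, Real.exp (R ξ))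
    (P : Ξ → ℝ) (hP : ∀ ξ, P ξ = Real.exp (R ξ) / Z)
    (elim₁ elim₂ : Finset Ξ) (h₁ : elim₁ ⊂ Finset.univ) (h₂ : elim₂ ⊂ Finset.univ)
    (D : Finset Ξ) (hD : D.Nonempty)
    (hD₁ : D ⊆ Finset.univ \ elim₁) (hD₂ : D ⊆ Finset.univ \ elim₂)
    (lik : Finset Ξ → ℝ)
    (hlik : ∀ E : Finset Ξ, lik E =
      (∏ ξ ∈ D, Real.exp (R ξ)) / (∑ ξ ∈ Finset.univ \ E, Real.exp (R ξ)) ^ D.card) :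
    lik elim₂ < lik elim₁ ↔ ∑ ξ ∈ elim₂, P ξ < ∑ ξ ∈ elim₁, P ξ :=
  strict_likelihood_iff_strict_eliminated_mass_general R Z hZ P hP elim₁ elim₂ D hD hD₁ hD₂ lik hlik
end
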